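/- For each point Q ∈ G = E(𝔽_q), let τ_Q be the permutation of {0,…,n} determined by P_{τ_Q(i)} = P_i + Q for all i. Then the coordinate action of τ_Q on ℤ^{n+1} maps L bijectively onto itself, and the map Q ↦ τ_Q (followed by restriction to L) is an injective group homomorphism from G into Aut(L). -/

import Mathlib

/-- The lattice attached to an enumeration `g` of a finite abelian group `G`, as a
ℤ-submodule of `ℤ^{n+1}`. -/
def LGsub {n : ℕ} {G : Type} [AddCommGroup G] (g : Fin (n+1) → G) :
    Submodule ℤ (Fin (n+1) → ℤ) where
  carrier := {x | (∑ i, x i) = 0 ∧ (∑ i, x i • g i) = 0}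
  zero_mem' := by simp
  add_mem' := by
    rintro a b ⟨ha1, ha2⟩ ⟨hb1, hb2⟩
    constructor
    · simp only [Pi.add_apply, Finset.sum_add_distrib, ha1, hb1, add_zero]
    · simp only [Pi.add_apply, add_smul, Finset.sum_add_distrib, ha2, hb2, add_zero]
  smul_mem' := by
    rintro c a ⟨ha1, ha2⟩
    have h : ∀ i, (c * a i) • g i = c • (a i • g i) := fun i => mul_smul c (a i) (g i)
    constructor
    · simp only [Pi.smul_apply, smul_eq_mul, ← Finset.mul_sum, ha1, mul_zero]
    · simp only [Pi.smul_apply, smul_eq_mul, h, ← Finset.smul_sum, ha2, smul_zero]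

/-- The automorphism group of a lattice `L ⊆ ℤ^N`: ℤ-module automorphisms of `L`
preserving the (squared) Euclidean norm. -/
def latAut {N : ℕ} (L : Submodule ℤ (Fin N → ℤ)) : Subgroup (L ≃ₗ[ℤ] L) where
  carrier := {f | ∀ x : L,
    ∑ j, (((f x : L) : Fin N → ℤ) j)^2 = ∑ j, ((x : Fin N → ℤ) j)^2}
  one_mem' := fun _ => rfl
  mul_mem' := by
    intro f f' hf hf' x
    exact (hf (f' x)).trans (hf' x)
  inv_mem' := by
    intro f hf x
    have h1 := hf (f.symm x)
    have h2 : f (f.symm x) = x := f.apply_symm_apply x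
    rw [h2] at h1
    exact h1.symm

section Aux

variable {n : ℕ} {G : Type} [AddCommGroup G] (g : Fin (n+1) ≃ G)

/-- translation permutation -/
def tperm (Q : G) : Fin (n+1) ≃ Fin (n+1) :=
  g.trans ((Equiv.addRight Q).trans g.symm)

lemma tperm_apply (Q : G) (i : Fin (n+1)) : tperm g Q i = g.symm (g i + Q) := rfl

lemma tperm_comp (Q Q' : G) (i : Fin (n+1)) :
    tperm g Q (tperm g Q' i) = tperm g (Q' + Q) i := by
  simp [tperm_apply, add_assoc]

lemma tperm_zero (i : Fin (n+1)) : tperm g 0 i = i := by simp [tperm_apply]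

lemma tperm_symm_apply (Q : G) (i : Fin (n+1)) :
    (tperm g Q).symm i = tperm g (-Q) i := by
  rw [Equiv.symm_apply_eq, tperm_comp]
  simp [tperm_zero]

lemma mem_LGsub (x : Fin (n+1) → ℤ) :
    x ∈ LGsub ⇑g ↔ (∑ i, x i) = 0 ∧ (∑ i, x i • g i) = 0 := Iff.rfl

lemma mem_key (Q : G) (x : Fin (n+1) → ℤ) :
    x ∈ LGsub ⇑g ↔ (fun j => x (tperm g Q j)) ∈ LGsub ⇑g := by
  have hsum : ∑ j, x (tperm g Q j) = ∑ i, x i := Equiv.sum_comp (tperm g Q) x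
  have hsum2 : ∑ j, x (tperm g Q j) • g j
      = ∑ i, x i • g i - (∑ i, x i) • Q := by
    have h1 := Equiv.sum_comp (tperm g Q).symm (fun j => x (tperm g Q j) • g j)
    rw [← h1]
    have h2 : ∀ k, x (tperm g Q ((tperm g Q).symm k)) • g ((tperm g Q).symm k)
        = x k • g k - x k • Q := by
      intro k
      rw [Equiv.apply_symm_apply, tperm_symm_apply, tperm_apply, Equiv.apply_symm_apply,
        smul_add, smul_neg, ← sub_eq_add_neg]
    rw [Finset.sum_congr rfl (fun k _ => h2 k), Finset.sum_sub_distrib, ← Finset.sum_smul]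
  rw [mem_LGsub, mem_LGsub, hsum, hsum2]
  constructor
  · rintro ⟨h1, h2⟩; exact ⟨h1, by rw [h1, h2, zero_smul, sub_zero]⟩
  · rintro ⟨h1, h2⟩
    refine ⟨h1, ?_⟩
    rw [h1, zero_smul, sub_zero] at h2; exact h2

/-- translation linear automorphism of the lattice -/
def tmap (Q : G) : (LGsub ⇑g) ≃ₗ[ℤ] (LGsub ⇑g) where
  toFun x := ⟨fun j => (x : Fin (n+1) → ℤ) (tperm g (-Q) j), (mem_key g (-Q) _).1 x.2⟩
  invFun x := ⟨fun j => (x : Fin (n+1) → ℤ) (tperm g Q j), (mem_key g Q _).1 x.2⟩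
  left_inv x := by
    ext j
    simp [tperm_comp, tperm_zero]
  right_inv x := by
    ext j
    simp [tperm_comp, tperm_zero]
  map_add' x y := rfl
  map_smul' c x := rfl

lemma tmap_apply (Q : G) (x : LGsub ⇑g) (j : Fin (n+1)) :
    ((tmap g Q x : LGsub ⇑g) : Fin (n+1) → ℤ) j = (x : Fin (n+1) → ℤ) (tperm g (-Q) j) :=
  rfl

lemma tmap_norm (Q : G) (x : LGsub ⇑g) :
    ∑ j, (((tmap g Q x : LGsub ⇑g) : Fin (n+1) → ℤ) j)^2
      = ∑ j, ((x : Fin (n+1) → ℤ) j)^2 :=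
  Equiv.sum_comp (tperm g (-Q)) (fun j => ((x : Fin (n+1) → ℤ) j)^2)

/-- the homomorphism into the lattice automorphism group -/
def tphi : Multiplicative G →* latAut (LGsub ⇑g) where
  toFun Q := ⟨tmap g Q.toAdd, fun x => tmap_norm g Q.toAdd x⟩
  map_one' := by
    ext x j
    simp [tmap_apply, tperm_zero]
  map_mul' Q Q' := by
    ext x j
    show ((x : Fin (n+1) → ℤ)) (tperm g (-(Q.toAdd + Q'.toAdd)) j)
      = ((tmap g Q'.toAdd x : LGsub ⇑g) : Fin (n+1) → ℤ) (tperm g (-Q.toAdd) j)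
    rw [tmap_apply, tperm_comp, ← neg_add]

lemma tphi_injective (hg0 : g 0 = 0) : Function.Injective (tphi g) := by
  rw [injective_iff_map_eq_one]
  intro Q hQ
  by_contra hne
  have hQ0 : Q.toAdd ≠ 0 := hne
  set P : G := Q.toAdd with hP
  set a : Fin (n+1) := g.symm P with ha
  set b : Fin (n+1) := g.symm (P + P) with hb
  set c : Fin (n+1) := g.symm 0 with hc
  set v : Fin (n+1) → ℤ := fun i =>
    2 * (if i = a then 1 else 0) - (if i = b then 1 else 0) - (if i = c then 1 else 0)
    with hv
  have hvmem : v ∈ LGsub ⇑g := by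
    constructor
    · simp [hv, Finset.sum_sub_distrib, ← Finset.mul_sum, Finset.sum_ite_eq']
    · have hterm : ∀ i, v i • g i =
        (if i = a then (2:ℤ) • g i else 0) - (if i = b then (1:ℤ) • g i else 0)
          - (if i = c then (1:ℤ) • g i else 0) := by
        intro i
        simp only [hv, sub_smul, ite_smul, zero_smul, mul_ite, mul_one, mul_zero]
      rw [Finset.sum_congr rfl (fun i _ => hterm i)]
      simp only [Finset.sum_sub_distrib, Finset.sum_ite_eq', Finset.mem_univ, if_true]
      simp [ha, hb, hc, two_smul]
  have htm : tmap g P = (1 : (LGsub ⇑g) ≃ₗ[ℤ] (LGsub ⇑g)) := congrArg Subtype.val hQ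
  have h2 : tmap g P ⟨v, hvmem⟩ = (⟨v, hvmem⟩ : LGsub ⇑g) := by rw [htm]; rfl
  have hfix := congr_fun (congrArg Subtype.val h2) a
  rw [tmap_apply] at hfix
  have hta : tperm g (-P) a = c := by
    rw [tperm_apply, ha, Equiv.apply_symm_apply, add_neg_cancel, hc]
  rw [hta] at hfix
  -- hfix : v c = v a
  have hac : c ≠ a := fun h => hQ0 (by
    have := g.symm.injective (hc ▸ ha ▸ h)
    exact this.symm)
  have hab : a ≠ b := fun h => hQ0 (by
    have := g.symm.injective (ha ▸ hb ▸ h)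
    have : P = P + P := this
    exact (left_eq_add.mp this))
  have hva : v a = 2 := by
    show ((2 * if a = a then 1 else 0) - if a = b then 1 else 0) - (if a = c then (1:ℤ) else 0) = 2
    rw [if_pos rfl, if_neg hab, if_neg hac.symm]
    ring
  have hfix' : v c = v a := hfix
  rw [hva] at hfix'
  have hvc : v c = ((2 * if c = a then 1 else 0) - if c = b then 1 else 0) - (if c = c then (1:ℤ) else 0) := rfl
  rw [hvc, if_neg hac, if_pos rfl] at hfix'
  split_ifs at hfix' <;> omega

theorem mainThm (hg0 : g 0 = 0) :
    (∀ (Q : G) (x : Fin (n+1) → ℤ),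
      x ∈ LGsub ⇑g ↔ (fun j => x (g.symm (g j + Q))) ∈ LGsub ⇑g) ∧
    ∃ φ : Multiplicative G →* latAut (LGsub ⇑g),
      Function.Injective φ ∧
      ∀ (Q : G) (x : LGsub ⇑g) (j : Fin (n+1)),
        ((φ (Multiplicative.ofAdd Q) : (LGsub ⇑g) ≃ₗ[ℤ] (LGsub ⇑g)) x :
            Fin (n+1) → ℤ) (g.symm (g j + Q))
          = (x : Fin (n+1) → ℤ) j := by
  refine ⟨fun Q x => mem_key g Q x, tphi g, tphi_injective g hg0, ?_⟩
  intro Q x j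
  have h : g.symm (g j + Q) = tperm g Q j := rfl
  rw [h]
  show ((x : Fin (n+1) → ℤ)) (tperm g (-(Multiplicative.ofAdd Q).toAdd) (tperm g Q j)) = _
  rw [tperm_comp]
  simp [tperm_zero]

end Aux

open Classical in
/-- For each rational point `Q` of an elliptic curve over `𝔽_q`, the translation
permutation `τ_Q` of the indices, determined by `g(τ_Q(i)) = g(i) + Q`, induces a
coordinate map sending the elliptic function field lattice `L` bijectively onto
itself; and `Q ↦ τ_Q` followed by restriction to `L` is an injective group
homomorphism from `G = E(𝔽_q)` into `Aut(L)`. -/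


theorem stmt14 (q : ℕ) (Fq : Type) [Field Fq] [Fintype Fq] (hq : Fintype.card Fq = q)
    (W : WeierstrassCurve Fq) [W.IsElliptic]
    [Fintype W.toAffine.Point] (n : ℕ)
    (hcard : Fintype.card W.toAffine.Point = n + 1)
    (g : Fin (n+1) ≃ W.toAffine.Point) (hg0 : g 0 = 0) :
    (∀ (Q : W.toAffine.Point) (x : Fin (n+1) → ℤ),
      x ∈ LGsub ⇑g ↔ (fun j => x (g.symm (g j + Q))) ∈ LGsub ⇑g) ∧
    ∃ φ : Multiplicative W.toAffine.Point →* latAut (LGsub ⇑g),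
      Function.Injective φ ∧
      ∀ (Q : W.toAffine.Point) (x : LGsub ⇑g) (j : Fin (n+1)),
        ((φ (Multiplicative.ofAdd Q) : (LGsub ⇑g) ≃ₗ[ℤ] (LGsub ⇑g)) x :
            Fin (n+1) → ℤ) (g.symm (g j + Q))
          = (x : Fin (n+1) → ℤ) j :=
  mainThm g hg0
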